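/- If μ is a sign partition of n whose smallest part b is repeated (i.e., appears with multiplicity m ≥ 2), then b = 1 and m = 2. Specifically, if 1 appears m ≥ 2 times in μ then χ^{(n-1,1)}(μ) = m - 1, and if b > 1 is the smallest part appearing m ≥ 2 times then χ^{(n-b,b)}(μ) = m. -/

import Mathlib

/-- The beta-set (set of first-column hook lengths) of a partition given as a
weakly decreasing list of parts: the `i`-th part `a` contributes `a + (ℓ - 1 - i)`. -/
def betaSet (l : List ℕ) : Finset ℕ :=
  (l.mapIdx (fun i a => a + (l.length - 1 - i))).toFinset

/-- The leg length of the `a`-hook removed from the partition with beta-set `X`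
by replacing the beta-number `x` with `x - a`: the number of beta-numbers
strictly between `x - a` and `x`. -/
def legLen (X : Finset ℕ) (a x : ℕ) : ℕ :=
  (X.filter (fun y => x - a < y ∧ y < x)).card

/-- For a partition with beta-set `X` and a list `l = [a₁,…,a_k]`, the multiset of
the sums of leg lengths of the hooks removed along all `l`-paths of `X`, i.e. along
all ways of successively removing an `a₁`-hook, an `a₂`-hook, … ending at the
empty partition.  Removing an `a`-hook from a partition with beta-set `X`
corresponds to replacing some `x ∈ X` with `x - a ∉ X` (where `a ≤ x`). -/
def legSums : Finset ℕ → List ℕ → Multiset ℕ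
  | X, [] => if X = Finset.range X.card then {0} else 0
  | X, a :: r =>
      (X.filter (fun x => a ≤ x ∧ x - a ∉ X)).val.bind
        (fun x => (legSums (insert (x - a) (X.erase x)) r).map (fun L => legLen X a x + L))

/-- The number of `l`-paths in the partition with beta-set `X`:
the number of ways to successively remove hooks of lengths `a₁, a₂, …`
(for `l = [a₁,…,a_k]`) ending at the empty partition. -/
def numPaths (X : Finset ℕ) (l : List ℕ) : ℕ := (legSums X l).card

/-- Murnaghan–Nakayama evaluation: for partitions `lam`, `mu` given as weakly
decreasing lists, this is `Σ_paths (-1)^(sum of leg lengths)`, which by the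
Murnaghan–Nakayama formula equals the value `χ^lam(mu)` of the irreducible
character of the symmetric group indexed by `lam` on the class of cycle type `mu`. -/
def charList (lam mu : List ℕ) : ℤ :=
  ((legSums (betaSet lam) mu).map (fun L => (-1 : ℤ) ^ L)).sum

/-- The parts of a partition as a weakly decreasing list. -/
def sortedParts {n : ℕ} (mu : n.Partition) : List ℕ :=
  (Multiset.sort mu.parts (· ≤ ·)).reverse

/-- The value `χ^lam(mu)` of the irreducible character of `S_n` indexed by the
partition `lam` on the conjugacy class of cycle type `mu`, computed by the
Murnaghan–Nakayama formula. -/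
def charValue {n : ℕ} (lam mu : n.Partition) : ℤ :=
  charList (sortedParts lam) (sortedParts mu)

/-!
Let `b` be the smallest part of `μ`, of multiplicity `m`. On permutations all of whose cycles have
length at least `b`, the two-row character satisfies `χ^(n-b,b) = π_b - π_{b-1}`, where `π_k`
counts fixed `k`-subsets; the only fixed `b`-subsets are single `b`-cycles, so
`χ^(n-b,b)(μ) = m - [b = 1]`. If `μ` is a sign partition this lies in `{0, ±1}`, which together
with `m ≥ 2` forces `b = 1` and `m = 2`. The value is computed from the Murnaghan–Nakayama
recursion on the two-bead beta-set `{c, d}`, by induction on the list of parts.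
-/

def charOfBetaSet (X : Finset ℕ) (l : List ℕ) : ℤ :=
  ((legSums X l).map (fun L => (-1 : ℤ) ^ L)).sum

lemma charOfBetaSet_nil (X : Finset ℕ) :
    charOfBetaSet X [] = if X = Finset.range X.card then 1 else 0 := by
  unfold charOfBetaSet legSums
  split <;> simp

lemma charOfBetaSet_cons (X : Finset ℕ) (a : ℕ) (r : List ℕ) :
    charOfBetaSet X (a :: r) = ∑ x ∈ X.filter (fun x => a ≤ x ∧ x - a ∉ X),
      (-1 : ℤ) ^ legLen X a x * charOfBetaSet (insert (x - a) (X.erase x)) r := by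
  rw [charOfBetaSet, legSums, Multiset.map_bind, Multiset.sum_bind, Finset.sum]
  refine congrArg _ (Multiset.map_congr rfl fun x _ => ?_)
  simp only [charOfBetaSet, Multiset.map_map, Function.comp_def, pow_add,
    Multiset.sum_map_mul_left]

def pairMoveTerm (x y a : ℕ) (r : List ℕ) : ℤ :=
  if a ≤ x ∧ x - a ≠ y then
    (if x - a < y ∧ y < x then -1 else 1) * charOfBetaSet {x - a, y} r
  else 0

lemma legLen_pair {x y : ℕ} (a : ℕ) :
    legLen {x, y} a x = if x - a < y ∧ y < x then 1 else 0 := by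
  unfold legLen
  rw [Finset.filter_insert, if_neg (by omega), Finset.filter_singleton]
  split_ifs <;> rfl

lemma summand_pair_eq_pairMoveTerm {s : Finset ℕ} {x y a : ℕ} (hs : s = {x, y}) (hxy : x ≠ y)
    (ha : 0 < a) (r : List ℕ) :
    (if a ≤ x ∧ x - a ∉ s then
      (-1 : ℤ) ^ legLen s a x * charOfBetaSet (insert (x - a) (s.erase x)) r else 0) =
      pairMoveTerm x y a r := by
  subst hs
  rw [Finset.erase_insert (by simpa using hxy), legLen_pair, pairMoveTerm]
  by_cases hax : a ≤ x
  · have hmem : x - a ∉ ({x, y} : Finset ℕ) ↔ x - a ≠ y := by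
      simp only [Finset.mem_insert, Finset.mem_singleton]; omega
    simp only [hmem, hax, true_and]
    split_ifs <;> simp
  · simp [hax]

lemma charOfBetaSet_pair_cons {x y : ℕ} (hxy : x ≠ y) {a : ℕ} (ha : 0 < a) (r : List ℕ) :
    charOfBetaSet {x, y} (a :: r) = pairMoveTerm x y a r + pairMoveTerm y x a r := by
  rw [charOfBetaSet_cons, Finset.sum_filter, Finset.sum_pair hxy,
    summand_pair_eq_pairMoveTerm rfl hxy ha,
    summand_pair_eq_pairMoveTerm (Finset.pair_comm x y) hxy.symm ha]

lemma List.sum_eq_zero_or_le_sum {l : List ℕ} {b : ℕ} (hl : ∀ a ∈ l, b ≤ a) :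
    l.sum = 0 ∨ b ≤ l.sum := by
  cases l with
  | nil => exact Or.inl rfl
  | cons a r => exact Or.inr ((hl a (by simp)).trans (List.le_sum_of_mem (by simp)))

lemma List.count_eq_of_sum_lt_two_mul {l : List ℕ} {b : ℕ} (hl : ∀ a ∈ l, b ≤ a)
    (hsum : l.sum < 2 * b) : l.count b = if l.sum = b then 1 else 0 := by
  rcases l with _ | ⟨e, _ | ⟨f, t⟩⟩
  · rw [if_neg (by simp at hsum ⊢; omega), List.count_nil]
  · simp only [List.count_singleton, List.sum_singleton, beq_iff_eq]
  · have he := hl e (by simp)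
    have hf := hl f (by simp)
    simp only [List.sum_cons] at hsum
    omega

/-- `{c, d}` is the beta-set of the partition `(c - 1, d)`, and the right-hand side is
`π_d - π_{d-1}`. Letting `d` range over all of `0, …, b` makes the induction close: when the bead
`c` drops below `d` the two beads swap roles. -/
theorem charOfBetaSet_twoRow {b : ℕ} (hb : 0 < b) {l : List ℕ} (hl : ∀ a ∈ l, b ≤ a) {c d : ℕ}
    (hdc : d < c) (hdb : d ≤ b) (hsum : l.sum + 1 = c + d) :
    charOfBetaSet {c, d} l =
      (if d = b then (l.count b : ℤ) else 0) + (if d = 0 then 1 else 0) -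
        (if d = 1 then 1 else 0) := by
  induction l generalizing c d with
  | nil =>
    obtain ⟨rfl, rfl⟩ : c = 1 ∧ d = 0 := by simp at hsum; omega
    rw [charOfBetaSet_nil, if_pos (by decide)]
    simp [hb.ne]
  | cons a r ih =>
    have hab : b ≤ a := hl a (by simp)
    have hr : ∀ x ∈ r, b ≤ x := fun x hx => hl x (by simp [hx])
    have hsum' : a + r.sum + 1 = c + d := by simpa [add_assoc] using hsum
    have hd : pairMoveTerm d c a r = if a = d then 1 else 0 := by
      by_cases had : a = d
      · subst had
        rw [pairMoveTerm, if_pos ⟨le_rfl, by omega⟩, if_neg (by omega), Nat.sub_self,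
          Finset.pair_comm, ih hr (by omega) (Nat.zero_le b) (by omega)]
        simp [hb.ne]
      · rw [pairMoveTerm, if_neg (by omega), if_neg had]
    rw [charOfBetaSet_pair_cons hdc.ne' (by omega), hd]
    have hr0 := List.sum_eq_zero_or_le_sum hr
    simp only [List.count_cons, beq_iff_eq]
    push_cast
    rcases (by omega : ¬(a ≤ c ∧ c - a ≠ d) ∨ (a ≤ c ∧ d < c - a) ∨ (a ≤ c ∧ c - a < d)) with
      hblocked | ⟨hac, hgt⟩ | ⟨hac, hlt⟩
    · have hcount := List.count_eq_of_sum_lt_two_mul hr (by omega)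
      rw [pairMoveTerm, if_neg hblocked]
      split_ifs at hcount ⊢ <;> omega
    · rw [pairMoveTerm, if_pos ⟨hac, by omega⟩, if_neg (by omega), one_mul,
        ih hr hgt hdb (by omega)]
      split_ifs <;> omega
    · have hcount := List.count_eq_of_sum_lt_two_mul hr (by omega)
      rw [pairMoveTerm, if_pos ⟨hac, by omega⟩, if_pos ⟨hlt, by omega⟩, Finset.pair_comm,
        ih hr hlt (by omega) (by omega)]
      split_ifs at hcount ⊢ <;> omega

lemma coe_sortedParts {n : ℕ} (μ : n.Partition) : (sortedParts μ : Multiset ℕ) = μ.parts := by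
  rw [sortedParts, Multiset.coe_reverse, Multiset.sort_eq]

lemma sortedParts_of_parts_eq_pair {n : ℕ} {lam : n.Partition} {p q : ℕ} (hqp : q ≤ p)
    (h : lam.parts = p ::ₘ {q}) : sortedParts lam = [p, q] := by
  have hsort : Multiset.sort (p ::ₘ {q}) (· ≤ ·) = [q, p] := by
    apply List.Perm.eq_of_pairwise' (r := (· ≤ ·)) (Multiset.pairwise_sort _ _)
    · simp [hqp]
    · rw [← Multiset.coe_eq_coe, Multiset.sort_eq]
      exact Multiset.cons_swap p q 0
  rw [sortedParts, h, hsort]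
  rfl

lemma betaSet_pair (p q : ℕ) : betaSet [p, q] = {p + 1, q} := by
  ext y
  simp [betaSet, List.mapIdx, List.mapIdx.go]

theorem charValue_twoRow {n b : ℕ} {lam μ : n.Partition} (hb : 0 < b) (h2b : 2 * b ≤ n)
    (hlam : lam.parts = (n - b) ::ₘ {b}) (hmin : ∀ a ∈ μ.parts, b ≤ a) :
    charValue lam μ = μ.parts.count b - if b = 1 then 1 else 0 := by
  have hμ := coe_sortedParts μ
  change charOfBetaSet (betaSet (sortedParts lam)) (sortedParts μ) = _
  rw [sortedParts_of_parts_eq_pair (by omega) hlam, betaSet_pair]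
  rw [← hμ, Multiset.coe_count]
  refine (charOfBetaSet_twoRow hb (fun a ha => hmin a ?_) (by omega) (by omega) ?_).trans ?_
  · rwa [← hμ, Multiset.mem_coe]
  · rw [← Multiset.sum_coe, hμ, μ.parts_sum]; omega
  · simp [hb.ne']

lemma Multiset.mul_le_sum_of_le_count {s : Multiset ℕ} {a k : ℕ} (h : k ≤ s.count a) :
    k * a ≤ s.sum := by
  obtain ⟨u, rfl⟩ := Multiset.le_iff_exists_add.mp (Multiset.le_count_iff_replicate_le.mp h)
  rw [Multiset.sum_add, Multiset.sum_replicate, smul_eq_mul]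
  omega

def twoRowPartition (n b : ℕ) (hb : 0 < b) (h2b : 2 * b ≤ n) : n.Partition where
  parts := (n - b) ::ₘ {b}
  parts_pos := by
    simp only [Multiset.mem_cons, Multiset.mem_singleton]
    omega
  parts_sum := by
    simp only [Multiset.sum_cons, Multiset.sum_singleton]
    omega

theorem smallest_repeated_part_general (n : ℕ) (μ : n.Partition) (b m : ℕ)
    (hmin : ∀ a ∈ μ.parts, b ≤ a)
    (hcount : μ.parts.count b = m) (hm : 2 ≤ m) :
    ((∀ lam : n.Partition, charValue lam μ ∈ ({0, 1, -1} : Set ℤ)) → b = 1 ∧ m = 2) ∧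
    (b = 1 → ∀ lam : n.Partition, lam.parts = (n - 1) ::ₘ ({1} : Multiset ℕ) →
      charValue lam μ = (m : ℤ) - 1) ∧
    (1 < b → ∀ lam : n.Partition, lam.parts = (n - b) ::ₘ ({b} : Multiset ℕ) →
      charValue lam μ = (m : ℤ)) := by
  have hb : 0 < b := μ.parts_pos (Multiset.count_pos.mp (by omega))
  have h2b : 2 * b ≤ n := μ.parts_sum ▸ Multiset.mul_le_sum_of_le_count (hcount ▸ hm)
  have hvalue : ∀ lam : n.Partition, lam.parts = (n - b) ::ₘ {b} →
      charValue lam μ = m - if b = 1 then 1 else 0 := fun lam hlam =>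
    hcount ▸ charValue_twoRow hb h2b hlam hmin
  refine ⟨fun hsign => ?_, fun hb1 lam hlam => ?_, fun hb1 lam hlam => ?_⟩
  · have := hsign (twoRowPartition n b hb h2b)
    rw [hvalue _ rfl] at this
    simp only [Set.mem_insert_iff, Set.mem_singleton_iff] at this
    split_ifs at this <;> omega
  · rw [hvalue lam (hb1 ▸ hlam), if_pos hb1]
  · rw [hvalue lam hlam, if_neg hb1.ne', sub_zero]

/-- If `μ` is a sign partition of `n` whose smallest part `b` has multiplicity
`m ≥ 2`, then `b = 1` and `m = 2`.  Specifically, if `1` appears `m ≥ 2` times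
in `μ` then `χ^{(n-1,1)}(μ) = m - 1`, and if the smallest part `b > 1` appears
`m ≥ 2` times then `χ^{(n-b,b)}(μ) = m`. -/
theorem smallest_repeated_part (n : ℕ) (μ : n.Partition) (b m : ℕ)
    (hb : b ∈ μ.parts) (hmin : ∀ a ∈ μ.parts, b ≤ a)
    (hcount : μ.parts.count b = m) (hm : 2 ≤ m) :
    ((∀ lam : n.Partition, charValue lam μ ∈ ({0, 1, -1} : Set ℤ)) → b = 1 ∧ m = 2) ∧
    (b = 1 → ∀ lam : n.Partition, lam.parts = (n - 1) ::ₘ ({1} : Multiset ℕ) →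
      charValue lam μ = (m : ℤ) - 1) ∧
    (1 < b → ∀ lam : n.Partition, lam.parts = (n - b) ::ₘ ({b} : Multiset ℕ) →
      charValue lam μ = (m : ℤ)) :=
  smallest_repeated_part_general n μ b m hmin hcount hm
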